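/- For any finite simple graph G with at least k+1 vertices, the sum index satisfies S(G) ≥ δ_k(G) + δ_{k+1}(G) − k, where δ_j(G) denotes the j-th smallest vertex degree of G. -/

import Mathlib

/-!
Fix an injective labelling `f` and list the vertices as `v₁, …, vₙ` by nondecreasing degree,
so that `deg vᵢ = δᵢ`. Among `vₖ, …, vₙ` let `u` carry the largest and `v` the smallest label.
The sums `f u + f x` (`x ∈ N(u)`) and `f v + f y` (`y ∈ N(v)`) are `deg u + deg v` values, and a
value occurring in both lists is either `f u + f v` or determined by a vertex labelled below `v`
or above `u`, that is, by one of `v₁, …, v_{k-1}`. Hence there are at least `deg u + deg v - k`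
distinct edge sums, and `deg u + deg v ≥ δₖ + δ_{k+1}` because `u ≠ v`.
-/

open SimpleGraph

/-- The sum index of a finite simple graph. -/
noncomputable def sumIndex {V : Type*} [Fintype V] (G : SimpleGraph V) : ℕ :=
  sInf {n | ∃ f : V → ℤ, Function.Injective f ∧
    {s : ℤ | ∃ u v, G.Adj u v ∧ s = f u + f v}.ncard = n}

/-- `δ_j(G)`: the `j`-th smallest vertex degree of `G` (1-indexed). -/
def nthSmallestDegree {V : Type*} [Fintype V] (G : SimpleGraph V) [DecidableRel G.Adj]
    (j : ℕ) : ℕ :=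
  ((Finset.univ.val.map fun v => G.degree v).sort (· ≤ ·)).getD (j - 1) 0

open Finset

theorem Monotone.add_le_add_of_ne {α : Type*} [AddCommMagma α] [Preorder α] [AddLeftMono α]
    [AddRightMono α] {n : ℕ} {d : Fin n → α} (hd : Monotone d) {a b i j : Fin n}
    (hab : (a : ℕ) + 1 = b) (hi : a ≤ i) (hj : a ≤ j) (hij : i ≠ j) :
    d a + d b ≤ d i + d j := by
  rcases lt_or_gt_of_ne hij with h | h
  · exact add_le_add (hd hi) (hd (Fin.le_def.2 (by omega)))
  · rw [add_comm (d i)]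
    exact add_le_add (hd hj) (hd (Fin.le_def.2 (by omega)))

theorem card_filter_lt_or_lt_le {V α : Type*} [Fintype V] [LinearOrder α] {n : ℕ} (e : Fin n ≃ V)
    {f : V → α} {a : Fin n} {lo hi : α} (h : ∀ x, a ≤ x → lo ≤ f (e x) ∧ f (e x) ≤ hi) :
    #{w | f w < lo ∨ hi < f w} ≤ a := by
  calc #{w | f w < lo ∨ hi < f w} ≤ #(Iio a) := by
        refine card_le_card_of_injOn e.symm (fun w hw => ?_) e.symm.injective.injOn
        rw [coe_Iio, Set.mem_Iio, ← not_le]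
        intro haw
        simp only [coe_filter, mem_univ, true_and, Set.mem_ofPred_eq] at hw
        have hw' := h _ haw
        rw [Equiv.apply_symm_apply] at hw'
        exact not_or.2 ⟨hw'.1.not_gt, hw'.2.not_gt⟩ hw
    _ = a := Fin.card_Iio a

namespace SimpleGraph

variable {V : Type*} (G : SimpleGraph V)

def edgeSums (f : V → ℤ) : Set ℤ :=
  {s | ∃ u v, G.Adj u v ∧ s = f u + f v}

theorem edgeSums_finite [Finite V] (f : V → ℤ) : (G.edgeSums f).Finite :=
  (Set.finite_range fun p : V × V => f p.1 + f p.2).subset <| by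
    rintro _ ⟨u, v, -, rfl⟩
    exact ⟨(u, v), rfl⟩

theorem exists_injective_ncard_edgeSums_eq_sumIndex [Fintype V] :
    ∃ f : V → ℤ, Function.Injective f ∧ (G.edgeSums f).ncard = sumIndex G := by
  have hne : {n | ∃ f : V → ℤ, Function.Injective f ∧ (G.edgeSums f).ncard = n}.Nonempty :=
    ⟨_, _, (Nat.cast_injective.comp Fin.val_injective).comp (Fintype.equivFin V).injective, rfl⟩
  exact Nat.sInf_mem hne

variable [Fintype V] [DecidableRel G.Adj]

theorem exists_equiv_fin_degree_eq_nthSmallestDegree :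
    ∃ e : Fin (Fintype.card V) ≃ V,
      Monotone (fun i => G.degree (e i)) ∧ ∀ i, G.degree (e i) = nthSmallestDegree G (i + 1) := by
  set d : Fin (Fintype.card V) → ℕ := fun i => G.degree ((Fintype.equivFin V).symm i)
  set e := (Tuple.sort d).trans (Fintype.equivFin V).symm
  refine ⟨e, Tuple.monotone_sort d, fun i => ?_⟩
  have hsorted : (univ.val.map fun v => G.degree v).sort (· ≤ ·) =
      List.ofFn fun i => G.degree (e i) := by
    refine List.Perm.eq_of_pairwise' (Multiset.pairwise_sort _ _)
      (List.sortedLE_iff_pairwise.1 (List.sortedLE_ofFn_iff.2 (Tuple.monotone_sort d))) ?_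
    rw [← Multiset.coe_eq_coe, Multiset.sort_eq, ← Fin.univ_val_map,
      ← Multiset.map_univ_val_equiv e, Multiset.map_map]
    rfl
  simp [nthSmallestDegree, hsorted]

theorem degree_add_degree_le_ncard_edgeSums {f : V → ℤ} (hf : Function.Injective f) {u v : V}
    (hvu : f v ≤ f u) :
    G.degree u + G.degree v ≤ (G.edgeSums f).ncard + #{w | f w < f v ∨ f u < f w} + 1 := by
  set Su := (G.neighborFinset u).image (f u + f ·)
  set Sv := (G.neighborFinset v).image (f v + f ·)
  have hcard (x : V) : #((G.neighborFinset x).image (f x + f ·)) = G.degree x := by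
    rw [card_image_of_injective _ fun a b h => hf (add_left_cancel h),
      card_neighborFinset_eq_degree]
  have hsub (x : V) : ↑((G.neighborFinset x).image (f x + f ·)) ⊆ G.edgeSums f := by
    intro s hs
    obtain ⟨a, ha, rfl⟩ := mem_image.1 hs
    exact ⟨x, a, (mem_neighborFinset _ _ _).1 ha, rfl⟩
  have hunion : #(Su ∪ Sv) ≤ (G.edgeSums f).ncard := by
    rw [← Set.ncard_coe_finset, coe_union]
    exact Set.ncard_le_ncard (Set.union_subset (hsub u) (hsub v)) (G.edgeSums_finite f)
  -- A common sum `f u + f a = f v + f b` is determined by `a` if `f a < f v`, by `b` if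
  -- `f a > f v` (then `f b > f u`), and equals `f u + f v` otherwise.
  have hinter : Su ∩ Sv ⊆ insert (f u + f v) (({w | f w < f v ∨ f u < f w} : Finset V).image
      fun w => if f w < f v then f u + f w else f v + f w) := by
    intro s hs
    obtain ⟨⟨a, -, rfl⟩, ⟨b, -, hb⟩⟩ := And.imp mem_image.1 mem_image.1 (mem_inter.1 hs)
    rcases lt_trichotomy (f a) (f v) with h | h | h
    · exact mem_insert_of_mem (mem_image.2 ⟨a, by simp [h], by simp [h]⟩)
    · simp [h]
    · refine mem_insert_of_mem (mem_image.2 ⟨b, ?_, ?_⟩)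
      · simp only [mem_filter, mem_univ, true_and]; omega
      · simp only [if_neg (by omega : ¬ f b < f v), hb]
  have hsplit := card_union_add_card_inter Su Sv
  have hinter_card := (card_le_card hinter).trans <|
    (card_insert_le _ _).trans (Nat.add_le_add_right card_image_le 1)
  rw [hcard, hcard] at hsplit
  omega

theorem nthSmallestDegree_add_le_ncard_edgeSums {f : V → ℤ} (hf : Function.Injective f) {k : ℕ}
    (hk : 1 ≤ k) (hcard : k + 1 ≤ Fintype.card V) :
    nthSmallestDegree G k + nthSmallestDegree G (k + 1) ≤ (G.edgeSums f).ncard + k := by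
  obtain ⟨e, hmono, hdeg⟩ := G.exists_equiv_fin_degree_eq_nthSmallestDegree
  set a : Fin (Fintype.card V) := ⟨k - 1, by omega⟩
  set b : Fin (Fintype.card V) := ⟨k, by omega⟩
  have ha : a ∈ Ici a := mem_Ici.2 le_rfl
  have hb : b ∈ Ici a := mem_Ici.2 (Fin.mk_le_mk.2 (by omega))
  obtain ⟨i, hi, hmax⟩ := (Ici a).exists_max_image (f ∘ e) ⟨a, ha⟩
  obtain ⟨j, hj, hmin⟩ := (Ici a).exists_min_image (f ∘ e) ⟨a, ha⟩
  have hij : j ≠ i := by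
    rintro rfl
    have : f (e a) = f (e b) := (le_antisymm (hmax a ha) (hmin a ha)).trans
      (le_antisymm (hmin b hb) (hmax b hb))
    exact absurd (e.injective (hf this)) (Fin.ne_of_lt (Fin.mk_lt_mk.2 (by omega)))
  have hdeg_ab : G.degree (e a) + G.degree (e b) ≤ G.degree (e i) + G.degree (e j) :=
    hmono.add_le_add_of_ne (Nat.sub_add_cancel hk) (mem_Ici.1 hi) (mem_Ici.1 hj) hij.symm
  have hout : #{w | f w < f (e j) ∨ f (e i) < f w} ≤ k - 1 :=
    card_filter_lt_or_lt_le e fun x hx => ⟨hmin x (mem_Ici.2 hx), hmax x (mem_Ici.2 hx)⟩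
  have hsum := G.degree_add_degree_le_ncard_edgeSums hf (hmin i hi)
  have hδ : nthSmallestDegree G k + nthSmallestDegree G (k + 1) =
      G.degree (e a) + G.degree (e b) := by
    rw [hdeg, hdeg, Nat.sub_add_cancel hk]
  omega

end SimpleGraph

theorem stmt6 {V : Type*} [Fintype V] (G : SimpleGraph V) [DecidableRel G.Adj]
    (k : ℕ) (hk : 1 ≤ k) (hcard : k + 1 ≤ Fintype.card V) :
    (nthSmallestDegree G k : ℤ) + nthSmallestDegree G (k + 1) - k ≤ (sumIndex G : ℤ) := by
  obtain ⟨f, hf, hfS⟩ := G.exists_injective_ncard_edgeSums_eq_sumIndex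
  have := G.nthSmallestDegree_add_le_ncard_edgeSums hf hk hcard
  omega
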